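/- If the stability parameter θ satisfies θ_1 < 0 and θ_i > 0 for all i > 1, then every θ-semi-stable finite graded algebra A (graded in [0,q]) is generated in degree 1. -/

import Mathlib

/-! If `A` is not generated in degree 1, take the admissible family `I^(k) = (A_{≥1})^k`. It is
non-trivial, and since `I^(k) ⊆ A_{≥k}` only the indices `k ≤ i` contribute to `w_i`, so
`w_i ≤ i · dim A_i`, with equality for `i = 1` and strict inequality for some `i > 1`, namely a
degree in which some power of `A_{≥1}` misses part of `A_i`. As `θ_i > 0` for `i > 1`,
`Σ θ_i w_i < Σ i θ_i dim A_i = 0`, contradicting semi-stability. -/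

open Module

variable {A : Type*}

/-- `A_{≥n}`: the sum of the graded pieces of degree at least `n`. -/
def Ageq [Ring A] [Algebra ℂ A] (𝒜 : ℕ → Submodule ℂ A) (n : ℕ) : Submodule ℂ A :=
  ⨆ i ∈ Set.Ici n, 𝒜 i

structure AdmissibleFamily [Ring A] [Algebra ℂ A] (𝒜 : ℕ → Submodule ℂ A)
    (I : ℕ → Submodule ℂ A) : Prop where
  ideal_left : ∀ k, 1 ≤ k → ∀ a : A, ∀ x ∈ I k, a * x ∈ I k
  ideal_right : ∀ k, 1 ≤ k → ∀ a : A, ∀ x ∈ I k, x * a ∈ I k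
  descending : ∀ k, 1 ≤ k → I (k + 1) ≤ I k
  mul_mem : ∀ k l, 1 ≤ k → 1 ≤ l → ∀ x ∈ I k, ∀ y ∈ I l, x * y ∈ I (k + l)
  eventually_zero : ∀ i, ∃ l, ∀ k, l ≤ k → I k ⊓ 𝒜 i = ⊥

/-- The family `I` dominates the tautological family `(A_{≥k})_k`. -/
def Dominates [Ring A] [Algebra ℂ A] (𝒜 I : ℕ → Submodule ℂ A) : Prop :=
  ∀ k, 1 ≤ k → Ageq 𝒜 k ≤ I k

/-- The weight `w_i = Σ_{k≥1} dim I^(k)_i` of an admissible family of ideals,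
computed with a cutoff `L` beyond which all `I^(k)_i` vanish. -/
noncomputable def weight [Ring A] [Algebra ℂ A] (𝒜 I : ℕ → Submodule ℂ A)
    (L i : ℕ) : ℕ :=
  ∑ k ∈ Finset.Icc 1 L, finrank ℂ ↥(I k ⊓ 𝒜 i)

/-- `A` is θ-stable: `Σ θ_i w_i > 0` for every non-trivial standard admissible
family of ideals (one not dominating the tautological family). -/
def ThetaStable [Ring A] [Algebra ℂ A] (𝒜 : ℕ → Submodule ℂ A) (q : ℕ)
    (θ : ℕ → ℤ) : Prop :=
  ∀ I : ℕ → Submodule ℂ A, AdmissibleFamily 𝒜 I → I 1 ≠ ⊥ → ¬ Dominates 𝒜 I →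
    ∀ L : ℕ, (∀ k, L ≤ k → ∀ i, I k ⊓ 𝒜 i = ⊥) →
      0 < ∑ i ∈ Finset.Icc 1 q, θ i * (weight 𝒜 I L i : ℤ)

def ThetaSemiStable [Ring A] [Algebra ℂ A] (𝒜 : ℕ → Submodule ℂ A) (q : ℕ)
    (θ : ℕ → ℤ) : Prop :=
  ∀ I : ℕ → Submodule ℂ A, AdmissibleFamily 𝒜 I → I 1 ≠ ⊥ → ¬ Dominates 𝒜 I →
    ∀ L : ℕ, (∀ k, L ≤ k → ∀ i, I k ⊓ 𝒜 i = ⊥) →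
      0 ≤ ∑ i ∈ Finset.Icc 1 q, θ i * (weight 𝒜 I L i : ℤ)

theorem pow_succ_le_pow_of_mul_self_le {M : Type*} [Monoid M] [Preorder M] [MulLeftMono M]
    {a : M} (ha : a * a ≤ a) {k : ℕ} (hk : 1 ≤ k) : a ^ (k + 1) ≤ a ^ k := by
  obtain ⟨j, rfl⟩ := Nat.exists_eq_add_of_le' hk
  calc a ^ (j + 1 + 1) = a ^ j * (a * a) := by rw [pow_succ, pow_succ, mul_assoc]
    _ ≤ a ^ j * a := mul_le_mul_right ha _
    _ = a ^ (j + 1) := (pow_succ a j).symm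

namespace Submodule

variable {R B : Type*} [CommSemiring R] [Semiring B] [Algebra R B] {s : Submodule R B}

theorem pow_eq_bot_of_le {L k : ℕ} (hL : s ^ L = ⊥) (hk : L ≤ k) : s ^ k = ⊥ := by
  rw [← Nat.add_sub_cancel' hk, pow_add, hL, bot_mul]

theorem top_mul_pow_le (htop : 1 ⊔ s = ⊤) (hs : s * s ≤ s) {k : ℕ} (hk : 1 ≤ k) :
    ⊤ * s ^ k ≤ s ^ k := by
  rw [← htop, sup_mul, one_mul, ← pow_succ']
  exact sup_le le_rfl (pow_succ_le_pow_of_mul_self_le hs hk)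

theorem pow_mul_top_le (htop : 1 ⊔ s = ⊤) (hs : s * s ≤ s) {k : ℕ} (hk : 1 ≤ k) :
    s ^ k * ⊤ ≤ s ^ k := by
  rw [← htop, mul_sup, mul_one, ← pow_succ]
  exact sup_le le_rfl (pow_succ_le_pow_of_mul_self_le hs hk)

end Submodule

section Ageq

variable [Ring A] [Algebra ℂ A] (𝒜 : ℕ → Submodule ℂ A)

theorem le_Ageq {n i : ℕ} (h : n ≤ i) : 𝒜 i ≤ Ageq 𝒜 n :=
  le_biSup _ h

theorem Ageq_antitone : Antitone (Ageq 𝒜) :=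
  fun _ _ h => iSup₂_le fun _ hi => le_Ageq 𝒜 (h.trans hi)

theorem Ageq_eq_bot_of_lt {q : ℕ} (hbound : ∀ i, q < i → 𝒜 i = ⊥) {n : ℕ} (hn : q < n) :
    Ageq 𝒜 n = ⊥ :=
  le_bot_iff.mp <| iSup₂_le fun i hi => (hbound i (hn.trans_le hi)).le

theorem Ageq_mul_le [SetLike.GradedMul 𝒜] (m n : ℕ) :
    Ageq 𝒜 m * Ageq 𝒜 n ≤ Ageq 𝒜 (m + n) := by
  simp only [Ageq, Submodule.iSup_mul, Submodule.mul_iSup]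
  refine iSup₂_le fun j hj => iSup₂_le fun i hi => Submodule.mul_le.2 fun x hx y hy => ?_
  exact le_Ageq 𝒜 (add_le_add hi hj) (SetLike.mul_mem_graded hx hy)

theorem Ageq_pow_le [SetLike.GradedMonoid 𝒜] (n k : ℕ) : Ageq 𝒜 n ^ k ≤ Ageq 𝒜 (n * k) := by
  induction k with
  | zero => exact Submodule.one_le.mpr (le_Ageq 𝒜 le_rfl (SetLike.one_mem_graded 𝒜))
  | succ k ih =>
    calc Ageq 𝒜 n ^ (k + 1) = Ageq 𝒜 n ^ k * Ageq 𝒜 n := pow_succ _ _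
      _ ≤ Ageq 𝒜 (n * k) * Ageq 𝒜 n := mul_le_mul' ih le_rfl
      _ ≤ Ageq 𝒜 (n * (k + 1)) := Ageq_mul_le 𝒜 _ _

theorem Ageq_one_pow_le [SetLike.GradedMonoid 𝒜] (k : ℕ) : Ageq 𝒜 1 ^ k ≤ Ageq 𝒜 k := by
  simpa using Ageq_pow_le 𝒜 1 k

theorem Ageq_one_mul_self_le [SetLike.GradedMul 𝒜] : Ageq 𝒜 1 * Ageq 𝒜 1 ≤ Ageq 𝒜 1 :=
  (Ageq_mul_le 𝒜 1 1).trans (Ageq_antitone 𝒜 one_le_two)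

theorem dominates_Ageq_one_pow_iff [SetLike.GradedMonoid 𝒜] :
    Dominates 𝒜 (Ageq 𝒜 1 ^ ·) ↔ ∀ k, 1 ≤ k → Ageq 𝒜 1 ^ k = Ageq 𝒜 k :=
  forall₂_congr fun k _ => ⟨(Ageq_one_pow_le 𝒜 k).antisymm, Eq.ge⟩

variable [DirectSum.Decomposition 𝒜]

theorem Ageq_inf_eq_bot {n i : ℕ} (h : i < n) : Ageq 𝒜 n ⊓ 𝒜 i = ⊥ := by
  have hle : Ageq 𝒜 n ≤ ⨆ (j) (_ : j ≠ i), 𝒜 j :=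
    iSup₂_le fun j hj => le_iSup₂ (f := fun j (_ : j ≠ i) => 𝒜 j) j (h.trans_le hj).ne'
  exact (((DirectSum.Decomposition.isInternal 𝒜).submodule_iSupIndep i).mono_right hle).symm.eq_bot

theorem one_sup_Ageq_one (hconn : 𝒜 0 = Submodule.span ℂ {1}) : 1 ⊔ Ageq 𝒜 1 = ⊤ := by
  refine eq_top_iff.2 ?_
  rw [← (DirectSum.Decomposition.isInternal 𝒜).submodule_iSup_eq_top]
  refine iSup_le fun i => ?_
  rcases Nat.eq_zero_or_pos i with rfl | hi
  · exact (hconn.trans Submodule.one_eq_span.symm).le.trans le_sup_left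
  · exact le_sup_of_le_right (le_Ageq 𝒜 hi)

end Ageq

theorem admissibleFamily_pow [Ring A] [Algebra ℂ A] (𝒜 : ℕ → Submodule ℂ A)
    {s : Submodule ℂ A} (htop : 1 ⊔ s = ⊤) (hs : s * s ≤ s) {L : ℕ} (hL : s ^ L = ⊥) :
    AdmissibleFamily 𝒜 (s ^ ·) where
  ideal_left _ hk _ _ hx :=
    Submodule.top_mul_pow_le htop hs hk (Submodule.mul_mem_mul Submodule.mem_top hx)
  ideal_right _ hk _ _ hx :=
    Submodule.pow_mul_top_le htop hs hk (Submodule.mul_mem_mul hx Submodule.mem_top)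
  descending _ hk := pow_succ_le_pow_of_mul_self_le hs hk
  mul_mem k l _ _ _ hx _ hy := pow_add s k l ▸ Submodule.mul_mem_mul hx hy
  eventually_zero _ := ⟨L, fun _ hk => by rw [Submodule.pow_eq_bot_of_le hL hk, bot_inf_eq]⟩

section weight

variable [Ring A] [Algebra ℂ A] (𝒜 : ℕ → Submodule ℂ A) [DirectSum.Decomposition 𝒜]
  {I : ℕ → Submodule ℂ A}

theorem weight_eq_sum_Icc (hI : ∀ k, I k ≤ Ageq 𝒜 k) {L i : ℕ} (hiL : i ≤ L) :
    weight 𝒜 I L i = ∑ k ∈ Finset.Icc 1 i, finrank ℂ ↥(I k ⊓ 𝒜 i) := by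
  refine (Finset.sum_subset (Finset.Icc_subset_Icc le_rfl hiL) fun k hk hki => ?_).symm
  have hik : i < k := by
    simp only [Finset.mem_Icc] at hk hki
    omega
  rw [eq_bot_mono (inf_le_inf_right _ (hI k)) (Ageq_inf_eq_bot 𝒜 hik), finrank_bot]

theorem weight_one (hI : ∀ k, I k ≤ Ageq 𝒜 k) (h1 : 𝒜 1 ≤ I 1) {L : ℕ} (hL : 1 ≤ L) :
    weight 𝒜 I L 1 = finrank ℂ ↥(𝒜 1) := by
  rw [weight_eq_sum_Icc 𝒜 hI hL, Finset.Icc_self, Finset.sum_singleton, inf_eq_right.mpr h1]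

variable [∀ i, FiniteDimensional ℂ ↥(𝒜 i)]

theorem weight_le (hI : ∀ k, I k ≤ Ageq 𝒜 k) {L i : ℕ} (hiL : i ≤ L) :
    weight 𝒜 I L i ≤ i * finrank ℂ ↥(𝒜 i) := by
  rw [weight_eq_sum_Icc 𝒜 hI hiL]
  calc ∑ k ∈ Finset.Icc 1 i, finrank ℂ ↥(I k ⊓ 𝒜 i)
      ≤ ∑ _k ∈ Finset.Icc 1 i, finrank ℂ ↥(𝒜 i) :=
        Finset.sum_le_sum fun _ _ => Submodule.finrank_mono inf_le_right
    _ = i * finrank ℂ ↥(𝒜 i) := by simp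

theorem weight_lt (hI : ∀ k, I k ≤ Ageq 𝒜 k) {L i k : ℕ} (hiL : i ≤ L) (hk : 1 ≤ k)
    (hki : k ≤ i) (hnot : ¬ 𝒜 i ≤ I k) : weight 𝒜 I L i < i * finrank ℂ ↥(𝒜 i) := by
  rw [weight_eq_sum_Icc 𝒜 hI hiL]
  calc ∑ k ∈ Finset.Icc 1 i, finrank ℂ ↥(I k ⊓ 𝒜 i)
      < ∑ _k ∈ Finset.Icc 1 i, finrank ℂ ↥(𝒜 i) := by
        refine Finset.sum_lt_sum (fun _ _ => Submodule.finrank_mono inf_le_right)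
          ⟨k, Finset.mem_Icc.2 ⟨hk, hki⟩, ?_⟩
        exact Submodule.finrank_lt_finrank_of_lt
          (inf_le_right.lt_of_ne fun h => hnot (inf_eq_right.mp h))
    _ = i * finrank ℂ ↥(𝒜 i) := by simp

end weight

theorem exists_not_le_of_not_dominates [Ring A] [Algebra ℂ A] {𝒜 I : ℕ → Submodule ℂ A}
    {q : ℕ} (hbound : ∀ i, q < i → 𝒜 i = ⊥) (hnd : ¬ Dominates 𝒜 I) :
    ∃ k i, 1 ≤ k ∧ k ≤ i ∧ i ≤ q ∧ ¬ 𝒜 i ≤ I k := by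
  simp only [Dominates, not_forall] at hnd
  obtain ⟨k, hk, hle⟩ := hnd
  obtain ⟨i, hki, hi⟩ : ∃ i, k ≤ i ∧ ¬ 𝒜 i ≤ I k := by
    by_contra! h
    exact hle (iSup₂_le h)
  refine ⟨k, i, hk, hki, ?_, hi⟩
  by_contra! hqi
  exact hi (hbound i hqi ▸ bot_le)

theorem sum_theta_mul_weight_lt [Ring A] [Algebra ℂ A] (𝒜 : ℕ → Submodule ℂ A)
    [DirectSum.Decomposition 𝒜] [∀ i, FiniteDimensional ℂ ↥(𝒜 i)] {I : ℕ → Submodule ℂ A}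
    (θ : ℕ → ℤ) {q L : ℕ} (hbound : ∀ i, q < i → 𝒜 i = ⊥) (hqL : q ≤ L)
    (hI : ∀ k, I k ≤ Ageq 𝒜 k) (h1 : 𝒜 1 ≤ I 1) (hnd : ¬ Dominates 𝒜 I)
    (hθ : ∀ i, 1 < i → i ≤ q → 0 < θ i) :
    ∑ i ∈ Finset.Icc 1 q, θ i * (weight 𝒜 I L i : ℤ) <
      ∑ i ∈ Finset.Icc 1 q, (i : ℤ) * θ i * (finrank ℂ ↥(𝒜 i) : ℤ) := by
  obtain ⟨k, i₀, hk, hki, hiq, hnot⟩ := exists_not_le_of_not_dominates hbound hnd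
  have hi₀ : 1 < i₀ := by
    by_contra! h
    obtain rfl : k = 1 := by omega
    obtain rfl : i₀ = 1 := by omega
    exact hnot h1
  refine Finset.sum_lt_sum (fun i hi => ?_) ⟨i₀, Finset.mem_Icc.2 ⟨hi₀.le, hiq⟩, ?_⟩
  · obtain ⟨hi1, hiq⟩ := Finset.mem_Icc.1 hi
    rcases hi1.eq_or_lt with rfl | hi1
    · rw [weight_one 𝒜 hI h1 (hi1.trans (hiq.trans hqL)), Nat.cast_one, one_mul]
    · rw [mul_comm (i : ℤ), mul_assoc]
      exact mul_le_mul_of_nonneg_left (mod_cast weight_le 𝒜 hI (hiq.trans hqL)) (hθ i hi1 hiq).le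
  · rw [mul_comm (i₀ : ℤ), mul_assoc]
    exact mul_lt_mul_of_pos_left (mod_cast weight_lt 𝒜 hI (hiq.trans hqL) hk hki hnot)
      (hθ i₀ hi₀ hiq)

theorem theta_semistable_generated_in_degree_one_general [Ring A] [Algebra ℂ A]
    (𝒜 : ℕ → Submodule ℂ A) [GradedAlgebra 𝒜] [∀ i, FiniteDimensional ℂ ↥(𝒜 i)]
    (q : ℕ) (hbound : ∀ i, q < i → 𝒜 i = ⊥)
    (hconn : 𝒜 0 = Submodule.span ℂ {1})
    (θ : ℕ → ℤ)
    (hparam2 : ∑ i ∈ Finset.Icc 1 q, (i : ℤ) * θ i * (finrank ℂ ↥(𝒜 i) : ℤ) = 0)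
    (hθ : ∀ i, 1 < i → i ≤ q → 0 < θ i)
    (hsemistable : ThetaSemiStable 𝒜 q θ) :
    ∀ k, 1 ≤ k → (Ageq 𝒜 1) ^ k = Ageq 𝒜 k := by
  rw [← dominates_Ageq_one_pow_iff]
  by_contra hnd
  have hnil : Ageq 𝒜 1 ^ (q + 1) = ⊥ :=
    eq_bot_mono (Ageq_one_pow_le 𝒜 _) (Ageq_eq_bot_of_lt 𝒜 hbound q.lt_succ_self)
  have hne : Ageq 𝒜 1 ^ 1 ≠ ⊥ := fun h => hnd fun k hk =>
    calc Ageq 𝒜 k ≤ Ageq 𝒜 1 := Ageq_antitone 𝒜 hk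
      _ = ⊥ := by rwa [pow_one] at h
      _ ≤ Ageq 𝒜 1 ^ k := bot_le
  have hss := hsemistable _
    (admissibleFamily_pow 𝒜 (one_sup_Ageq_one 𝒜 hconn) (Ageq_one_mul_self_le 𝒜) hnil) hne hnd
    (q + 1) fun k hk i => by rw [Submodule.pow_eq_bot_of_le hnil hk, bot_inf_eq]
  have hlt := sum_theta_mul_weight_lt 𝒜 θ hbound q.le_succ (Ageq_one_pow_le 𝒜)
    ((le_Ageq 𝒜 le_rfl).trans (pow_one _).ge) hnd hθ
  exact (hss.trans_lt hlt).ne' hparam2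

/-- if the stability parameter `θ` satisfies `θ₁ < 0` and `θ_i > 0`
for all `i > 1`, then every θ-semi-stable finite graded algebra `A` (graded in
`[0,q]`) is generated in degree 1. -/
theorem theta_semistable_generated_in_degree_one [Ring A] [Algebra ℂ A]
    (𝒜 : ℕ → Submodule ℂ A) [GradedAlgebra 𝒜] [∀ i, FiniteDimensional ℂ ↥(𝒜 i)]
    (q : ℕ) (hq : 1 ≤ q) (hbound : ∀ i, q < i → 𝒜 i = ⊥)
    (hconn : 𝒜 0 = Submodule.span ℂ {1})
    (hdpos : ∀ i, 1 ≤ i → i ≤ q → 0 < finrank ℂ ↥(𝒜 i))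
    (θ : ℕ → ℤ)
    (hparam1 : ∑ i ∈ Finset.Icc 1 q, θ i * (finrank ℂ ↥(𝒜 i) : ℤ) < 0)
    (hparam2 : ∑ i ∈ Finset.Icc 1 q, (i : ℤ) * θ i * (finrank ℂ ↥(𝒜 i) : ℤ) = 0)
    (hθ1 : θ 1 < 0) (hθ : ∀ i, 1 < i → i ≤ q → 0 < θ i)
    (hsemistable : ThetaSemiStable 𝒜 q θ) :
    ∀ k, 1 ≤ k → (Ageq 𝒜 1) ^ k = Ageq 𝒜 k :=
  theta_semistable_generated_in_degree_one_general 𝒜 q hbound hconn θ hparam2 hθ hsemistable
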